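/- Suppose the law of the nonnegative random variable ζ is absolutely continuous with respect to ν_γ with a density f : ℝ₊ → ℝ₊ that is nondecreasing and right-continuous, and set σ(t) = f(t)e^{−γt}. Then σ takes values in [0,1], and any nonnegative random variable ζ̂ defined on the same probability space as ζ satisfying ℙ(ζ̂ ≤ t, ζ ≤ u) = ℙ(ζ ≤ min(t,u)) + σ(t)(1 − e^{−γ·max(u−t,0)}) for all t, u ∈ ℝ₊ satisfies ℙ(ζ̂ < ζ) = 1 and ℙ(ζ̂ ≤ t) = f(t)e^{−γt} + ℙ(ζ ≤ t) for every t ∈ ℝ₊. -/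

import Mathlib

open MeasureTheory ProbabilityTheory Real Set

/-- The exponential distribution on `[0, ∞)` with mean `γ⁻¹` (rate `γ`), as a measure on `ℝ`. -/
noncomputable def expν (γ : ℝ) : Measure ℝ :=
  MeasureTheory.volume.withDensity
    (fun x => if 0 ≤ x then ENNReal.ofReal (γ * Real.exp (-γ * x)) else 0)

/-! Taking `t = u` in the joint identity gives `ℙ(ζ̂ ≤ t, ζ ≤ t) = ℙ(ζ ≤ t)`, so `ζ̂ ≤ ζ`
almost surely. On the diagonal `{ζ̂ = ζ}` the mass of the slab `ζ ∈ (s, t]` is at most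
`ℙ(ζ̂ ≤ t, ζ ≤ t) − ℙ(ζ̂ ≤ s, ζ ≤ t) = ℙ(s < ζ ≤ t) − f(s)(e^{−γs} − e^{−γt})`, and since `f` is
nondecreasing this is at most `γ(t − s)(f(t) − f(s))`. Summing over a grid of mesh `h` bounds the
diagonal mass on `(0, N]` by `γ h f(N)`, so it vanishes. Letting `u → ∞` gives the law of `ζ̂`,
and `σ(t) ≤ 1` because `f(t)e^{−γt} ≤ ∫_{(t,∞)} f dν_γ = ℙ(ζ > t)`. -/

open Filter Topology

section ExponentialMeasure

variable {γ : ℝ}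

lemma expν_eq_expMeasure : expν γ = expMeasure γ := by
  refine congrArg volume.withDensity (funext fun x => ?_)
  change _ = exponentialPDF γ x
  rw [exponentialPDF_eq]
  split_ifs <;> simp [neg_mul]

lemma isProbabilityMeasure_expν (hγ : 0 < γ) : IsProbabilityMeasure (expν γ) :=
  expν_eq_expMeasure ▸ isProbabilityMeasure_expMeasure hγ

lemma expν_Iic (hγ : 0 < γ) {t : ℝ} (ht : 0 ≤ t) :
    expν γ (Iic t) = ENNReal.ofReal (1 - exp (-γ * t)) := by
  have := isProbabilityMeasure_expν hγ
  rw [← ofReal_cdf, expν_eq_expMeasure, cdf_expMeasure_eq hγ, if_pos ht, neg_mul]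

lemma expν_Iic_zero (hγ : 0 < γ) : expν γ (Iic 0) = 0 := by
  simp [expν_Iic hγ le_rfl]

lemma expν_Ioi (hγ : 0 < γ) {t : ℝ} (ht : 0 ≤ t) :
    expν γ (Ioi t) = ENNReal.ofReal (exp (-γ * t)) := by
  have := isProbabilityMeasure_expν hγ
  rw [← compl_Iic, prob_compl_eq_one_sub measurableSet_Iic, expν_Iic hγ ht,
    ← ENNReal.ofReal_one, ← ENNReal.ofReal_sub _ (sub_nonneg.2 (exp_le_one_iff.2 (by nlinarith))),
    sub_sub_cancel]

lemma expν_Ioc (hγ : 0 < γ) {s t : ℝ} (hs : 0 ≤ s) (hst : s ≤ t) :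
    expν γ (Ioc s t) = ENNReal.ofReal (exp (-γ * s) - exp (-γ * t)) := by
  have := isProbabilityMeasure_expν hγ
  rw [← Ioi_sdiff_Ioi, measure_sdiff (Ioi_subset_Ioi hst) measurableSet_Ioi.nullMeasurableSet
    (measure_ne_top _ _), expν_Ioi hγ hs, expν_Ioi hγ (hs.trans hst),
    ENNReal.ofReal_sub _ (exp_pos _).le]

end ExponentialMeasure

lemma exp_neg_mul_sub_exp_neg_mul_le {γ s t : ℝ} (hγ : 0 ≤ γ) (hs : 0 ≤ s) (hst : s ≤ t) :
    exp (-γ * s) - exp (-γ * t) ≤ γ * (t - s) := by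
  have hsplit : exp (-γ * t) = exp (-γ * s) * exp (-γ * (t - s)) := by
    rw [← exp_add]; ring_nf
  have h1 : exp (-γ * s) ≤ 1 := exp_le_one_iff.2 (by nlinarith)
  have h2 : 1 - exp (-γ * (t - s)) ≤ γ * (t - s) := by linarith [add_one_le_exp (-γ * (t - s))]
  have h3 : 0 ≤ 1 - exp (-γ * (t - s)) := sub_nonneg.2 (exp_le_one_iff.2 (by nlinarith))
  rw [hsplit]
  nlinarith

section WithDensity

variable {α : Type*} [MeasurableSpace α] {ν : Measure α} {g : α → ENNReal} {s : Set α} {c : ENNReal}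

lemma const_mul_le_withDensity_apply (hs : MeasurableSet s) (h : ∀ x ∈ s, c ≤ g x) :
    c * ν s ≤ ν.withDensity g s := by
  rw [withDensity_apply _ hs, ← setLIntegral_const]
  exact lintegral_mono_ae ((ae_restrict_iff' hs).2 (Eventually.of_forall h))

lemma withDensity_apply_le_const_mul (hs : MeasurableSet s) (h : ∀ x ∈ s, g x ≤ c) :
    ν.withDensity g s ≤ c * ν s := by
  rw [withDensity_apply _ hs, ← setLIntegral_const]
  exact lintegral_mono_ae ((ae_restrict_iff' hs).2 (Eventually.of_forall h))

end WithDensity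

lemma measure_Ioc_eq_zero_of_le_mul_sub {ρ : Measure ℝ} {g : ℝ → ℝ} {a b C : ℝ} (hC : 0 ≤ C)
    (hg : MonotoneOn g (Ici a))
    (h : ∀ s t, a ≤ s → s ≤ t → ρ (Ioc s t) ≤ ENNReal.ofReal (C * (t - s) * (g t - g s))) :
    ρ (Ioc a b) = 0 := by
  rcases lt_or_ge b a with hba | hab
  · simp [Ioc_eq_empty_of_le hba.le]
  have hbound : ∀ n : ℕ, 1 ≤ n →
      ρ (Ioc a b) ≤ ENNReal.ofReal (C * ((b - a) / n) * (g b - g a)) := by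
    intro n hn
    set x : ℕ → ℝ := fun k => a + k * ((b - a) / n) with hx
    have hx0 : x 0 = a := by simp [hx]
    have hxn : x n = b := by
      have : (n : ℝ) ≠ 0 := by positivity
      simp only [hx]; field_simp; ring
    have hxa : ∀ k, a ≤ x k := fun k => le_add_of_nonneg_right (by positivity)
    have hstep : ∀ k, x (k + 1) - x k = (b - a) / n := fun k => by simp only [hx]; push_cast; ring
    have hxle : ∀ k, x k ≤ x (k + 1) := fun k => sub_nonneg.1 ((hstep k).symm ▸ by positivity)
    calc ρ (Ioc a b) = ρ (Ioc (x 0) (x n)) := by rw [hx0, hxn]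
      _ ≤ ∑ k ∈ Finset.range n, ρ (Ioc (x k) (x (k + 1))) :=
          (measure_mono (Ioc_subset_biUnion_Ioc n x)).trans (measure_biUnion_finset_le _ _)
      _ ≤ ∑ k ∈ Finset.range n,
            ENNReal.ofReal (C * ((b - a) / n) * (g (x (k + 1)) - g (x k))) :=
          Finset.sum_le_sum fun k _ => (h _ _ (hxa k) (hxle k)).trans_eq (by rw [hstep])
      _ = ENNReal.ofReal (∑ k ∈ Finset.range n, C * ((b - a) / n) * (g (x (k + 1)) - g (x k))) :=
          (ENNReal.ofReal_sum_of_nonneg fun k _ => mul_nonneg (by positivity)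
            (sub_nonneg.2 (hg (hxa k) (hxa (k + 1)) (hxle k)))).symm
      _ = ENNReal.ofReal (C * ((b - a) / n) * (g b - g a)) := by
          rw [← Finset.mul_sum, Finset.sum_range_sub (fun k => g (x k)), hx0, hxn]
  have htend : Tendsto (fun n : ℕ => ENNReal.ofReal (C * ((b - a) / n) * (g b - g a)))
      atTop (𝓝 0) := by
    rw [← ENNReal.ofReal_zero]
    apply ENNReal.tendsto_ofReal
    simpa using ((tendsto_const_div_atTop_nhds_zero_nat (b - a)).const_mul C).mul_const (g b - g a)
  exact le_antisymm (ge_of_tendsto htend (eventually_atTop.2 ⟨1, hbound⟩)) bot_le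

lemma measure_Ioi_eq_zero_of_le_mul_sub {ρ : Measure ℝ} {g : ℝ → ℝ} {a C : ℝ} (hC : 0 ≤ C)
    (hg : MonotoneOn g (Ici a))
    (h : ∀ s t, a ≤ s → s ≤ t → ρ (Ioc s t) ≤ ENNReal.ofReal (C * (t - s) * (g t - g s))) :
    ρ (Ioi a) = 0 := by
  rw [← iUnion_Ioc_eq_Ioi_self_iff (f := fun n : ℕ => a + n) |>.2 fun x _ => ⟨⌈x - a⌉₊, by
    linarith [Nat.le_ceil (x - a)]⟩]
  exact measure_iUnion_null fun n => measure_Ioc_eq_zero_of_le_mul_sub (b := a + n) hC hg h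

lemma ae_le_of_measure_le_and_le_eq {Ω : Type*} [MeasurableSpace Ω] {P : Measure Ω}
    [IsFiniteMeasure P] {X Y : Ω → ℝ} (hX : Measurable X) (hY : Measurable Y)
    (hY0 : ∀ ω, 0 ≤ Y ω) (h : ∀ q, 0 ≤ q → P {ω | X ω ≤ q ∧ Y ω ≤ q} = P {ω | Y ω ≤ q}) :
    ∀ᵐ ω ∂P, X ω ≤ Y ω := by
  have hnull : ∀ q : ℚ, P {ω | Y ω ≤ q ∧ ¬ X ω ≤ q} = 0 := by
    intro q
    rcases lt_or_ge (q : ℝ) 0 with hq | hq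
    · exact measure_mono_null (fun ω hω => absurd (hY0 ω) (hω.1.trans_lt hq).not_ge)
        measure_empty
    have hsdiff : {ω | Y ω ≤ q ∧ ¬ X ω ≤ q} = {ω | Y ω ≤ q} \ {ω | X ω ≤ q ∧ Y ω ≤ q} := by
      ext ω; simp only [Set.mem_sdiff, mem_ofPred_eq]; tauto
    have hmeas : MeasurableSet {ω | X ω ≤ q ∧ Y ω ≤ q} :=
      (measurableSet_le hX measurable_const).inter (measurableSet_le hY measurable_const)
    have hsub : {ω | X ω ≤ q ∧ Y ω ≤ q} ⊆ {ω | Y ω ≤ q} := fun ω hω => hω.2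
    rw [hsdiff, measure_sdiff hsub hmeas.nullMeasurableSet (measure_ne_top _ _),
      h q hq, tsub_self]
  rw [ae_iff]
  refine measure_mono_null (fun ω hω => ?_) (measure_iUnion_null hnull)
  obtain ⟨q, hYq, hqX⟩ := exists_rat_btwn (not_le.1 hω)
  exact mem_iUnion.2 ⟨q, hYq.le, hqX.not_ge⟩

section Density

variable {γ : ℝ} {f : ℝ → ℝ}

lemma withDensity_expν_Ioc_le (hγ : 0 < γ) (hf : MonotoneOn f (Ici 0)) {s t : ℝ} (hs : 0 ≤ s)
    (hst : s ≤ t) :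
    (expν γ).withDensity (fun x => ENNReal.ofReal (f x)) (Ioc s t) ≤
      ENNReal.ofReal (f t * (exp (-γ * s) - exp (-γ * t))) := by
  have hexp : 0 ≤ exp (-γ * s) - exp (-γ * t) :=
    sub_nonneg.2 (exp_le_exp.2 (by nlinarith))
  calc _ ≤ ENNReal.ofReal (f t) * expν γ (Ioc s t) :=
        withDensity_apply_le_const_mul measurableSet_Ioc fun x hx =>
          ENNReal.ofReal_le_ofReal (hf (hs.trans hx.1.le) (hs.trans hst) hx.2)
    _ = _ := by rw [expν_Ioc hγ hs hst, ENNReal.ofReal_mul' hexp]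

lemma ofReal_mul_exp_le_withDensity_expν_Ioi (hγ : 0 < γ) (hf : MonotoneOn f (Ici 0)) {t : ℝ}
    (ht : 0 ≤ t) :
    ENNReal.ofReal (f t * exp (-γ * t)) ≤
      (expν γ).withDensity (fun x => ENNReal.ofReal (f x)) (Ioi t) := by
  calc _ = ENNReal.ofReal (f t) * expν γ (Ioi t) := by
        rw [expν_Ioi hγ ht, ENNReal.ofReal_mul' (exp_pos _).le]
    _ ≤ _ := const_mul_le_withDensity_apply measurableSet_Ioi fun x hx =>
          ENNReal.ofReal_le_ofReal (hf ht (ht.trans hx.le) hx.le)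

end Density

def JointCDFIdentity {Ω : Type*} [MeasurableSpace Ω] (P : Measure Ω) (γ : ℝ) (f : ℝ → ℝ)
    (ζ ζhat : Ω → ℝ) : Prop :=
  ∀ t u, 0 ≤ t → 0 ≤ u →
    P {ω | ζhat ω ≤ t ∧ ζ ω ≤ u} =
      P {ω | ζ ω ≤ min t u} +
        ENNReal.ofReal (f t * exp (-γ * t) * (1 - exp (-γ * max (u - t) 0)))

namespace JointCDFIdentity

variable {Ω : Type*} [MeasurableSpace Ω] {P : Measure Ω} {γ : ℝ} {f : ℝ → ℝ} {ζ ζhat : Ω → ℝ}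

lemma measure_le_and_le (h : JointCDFIdentity P γ f ζ ζhat) {t u : ℝ} (ht : 0 ≤ t)
    (htu : t ≤ u) :
    P {ω | ζhat ω ≤ t ∧ ζ ω ≤ u} =
      P {ω | ζ ω ≤ t} + ENNReal.ofReal (f t * (exp (-γ * t) - exp (-γ * u))) := by
  rw [h t u ht (ht.trans htu), min_eq_left htu, max_eq_left (sub_nonneg.2 htu), mul_assoc,
    mul_one_sub, ← exp_add]
  ring_nf

lemma measure_le (h : JointCDFIdentity P γ f ζ ζhat) (hγ : 0 < γ) {t : ℝ} (ht : 0 ≤ t) :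
    P {ω | ζhat ω ≤ t} = ENNReal.ofReal (f t * exp (-γ * t)) + P {ω | ζ ω ≤ t} := by
  have hunion : ⋃ u : ℝ, {ω | ζhat ω ≤ t ∧ ζ ω ≤ u} = {ω | ζhat ω ≤ t} := by
    ext ω
    simp only [mem_iUnion, mem_ofPred_eq]
    exact ⟨fun ⟨_, hω, _⟩ => hω, fun hω => ⟨ζ ω, hω, le_rfl⟩⟩
  have hmono : Monotone fun u : ℝ => {ω | ζhat ω ≤ t ∧ ζ ω ≤ u} :=
    fun _ _ huv _ hω => ⟨hω.1, hω.2.trans huv⟩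
  have hexp : Tendsto (fun u => exp (-γ * u)) atTop (𝓝 0) :=
    tendsto_exp_atBot.comp (tendsto_id.const_mul_atTop_of_neg (neg_lt_zero.2 hγ))
  have hlim : Tendsto (fun u => P {ω | ζhat ω ≤ t ∧ ζ ω ≤ u}) atTop
      (𝓝 (P {ω | ζ ω ≤ t} + ENNReal.ofReal (f t * (exp (-γ * t) - 0)))) :=
    (tendsto_const_nhds.add (ENNReal.tendsto_ofReal
      ((tendsto_const_nhds.sub hexp).const_mul _))).congr'
      (eventually_ge_atTop t |>.mono fun u htu => (h.measure_le_and_le ht htu).symm)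
  rw [sub_zero] at hlim
  rw [← hunion, add_comm]
  exact tendsto_nhds_unique (tendsto_measure_iUnion_atTop hmono) hlim

lemma ae_le (h : JointCDFIdentity P γ f ζ ζhat) [IsFiniteMeasure P] (hζ : Measurable ζ)
    (hζhat : Measurable ζhat) (hζ0 : ∀ ω, 0 ≤ ζ ω) : ∀ᵐ ω ∂P, ζhat ω ≤ ζ ω :=
  ae_le_of_measure_le_and_le_eq hζhat hζ hζ0 fun q hq => by
    rw [h.measure_le_and_le hq le_rfl, sub_self, mul_zero, ENNReal.ofReal_zero, add_zero]

lemma measure_eq_and_mem_Ioc_le (h : JointCDFIdentity P γ f ζ ζhat) [IsFiniteMeasure P]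
    (hγ : 0 < γ) (hζ : Measurable ζ) (hζhat : Measurable ζhat) (hf : MonotoneOn f (Ici 0))
    (hlaw : P.map ζ = (expν γ).withDensity fun x => ENNReal.ofReal (f x))
    {s t : ℝ} (hs : 0 ≤ s) (hst : s ≤ t) :
    P {ω | ζhat ω = ζ ω ∧ ζ ω ∈ Ioc s t} ≤ ENNReal.ofReal (γ * (t - s) * (f t - f s)) := by
  set μ := (expν γ).withDensity fun x => ENNReal.ofReal (f x)
  have hcdf : ∀ x, P {ω | ζ ω ≤ x} = μ (Iic x) := fun x => by
    rw [← hlaw, Measure.map_apply hζ measurableSet_Iic]; rfl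
  have hsplit : P {ω | ζ ω ≤ t} = P {ω | ζ ω ≤ s} + μ (Ioc s t) := by
    rw [hcdf, hcdf, ← Iic_union_Ioc_eq_Iic hst,
      measure_union (Iic_disjoint_Ioc le_rfl) measurableSet_Ioc]
  have hsub : {ω | ζhat ω = ζ ω ∧ ζ ω ∈ Ioc s t} ⊆
      {ω | ζhat ω ≤ t ∧ ζ ω ≤ t} \ {ω | ζhat ω ≤ s ∧ ζ ω ≤ t} :=
    fun ω ⟨heq, hlt, hle⟩ => ⟨⟨heq ▸ hle, hle⟩, fun hω => (heq ▸ hω.1).not_gt hlt⟩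
  have hmeas : MeasurableSet {ω | ζhat ω ≤ s ∧ ζ ω ≤ t} :=
    (measurableSet_le hζhat measurable_const).inter (measurableSet_le hζ measurable_const)
  have hmono : {ω | ζhat ω ≤ s ∧ ζ ω ≤ t} ⊆ {ω | ζhat ω ≤ t ∧ ζ ω ≤ t} :=
    fun ω hω => ⟨hω.1.trans hst, hω.2⟩
  have hfst : f s ≤ f t := hf hs (hs.trans hst) hst
  calc P {ω | ζhat ω = ζ ω ∧ ζ ω ∈ Ioc s t}
      ≤ P {ω | ζhat ω ≤ t ∧ ζ ω ≤ t} - P {ω | ζhat ω ≤ s ∧ ζ ω ≤ t} :=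
        (measure_mono hsub).trans_eq (measure_sdiff hmono hmeas.nullMeasurableSet
          (measure_ne_top _ _))
    _ = μ (Ioc s t) - ENNReal.ofReal (f s * (exp (-γ * s) - exp (-γ * t))) := by
        rw [h.measure_le_and_le (hs.trans hst) le_rfl, h.measure_le_and_le hs hst, sub_self,
          mul_zero, ENNReal.ofReal_zero, add_zero, hsplit,
          ENNReal.add_sub_add_eq_sub_left (measure_ne_top _ _)]
    _ ≤ ENNReal.ofReal (f t * (exp (-γ * s) - exp (-γ * t))) -
          ENNReal.ofReal (f s * (exp (-γ * s) - exp (-γ * t))) :=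
        tsub_le_tsub_right (withDensity_expν_Ioc_le hγ hf hs hst) _
    _ ≤ ENNReal.ofReal ((f t - f s) * (exp (-γ * s) - exp (-γ * t))) := by
        rw [tsub_le_iff_right, sub_mul]
        exact (congrArg ENNReal.ofReal (sub_add_cancel _ _).symm).trans_le ENNReal.ofReal_add_le
    _ ≤ ENNReal.ofReal (γ * (t - s) * (f t - f s)) :=
        ENNReal.ofReal_le_ofReal (by
          nlinarith [exp_neg_mul_sub_exp_neg_mul_le hγ.le hs hst, sub_nonneg.2 hfst])

lemma measure_eq_eq_zero (h : JointCDFIdentity P γ f ζ ζhat) [IsFiniteMeasure P] (hγ : 0 < γ)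
    (hζ : Measurable ζ) (hζhat : Measurable ζhat) (hf : MonotoneOn f (Ici 0))
    (hlaw : P.map ζ = (expν γ).withDensity fun x => ENNReal.ofReal (f x)) :
    P {ω | ζhat ω = ζ ω} = 0 := by
  set ρ := (P.restrict {ω | ζhat ω = ζ ω}).map ζ
  have hρ : ∀ s, MeasurableSet s → ρ s = P {ω | ζhat ω = ζ ω ∧ ζ ω ∈ s} := fun s hs => by
    rw [Measure.map_apply hζ hs, Measure.restrict_apply (hζ hs), inter_comm]; rfl
  have hIic : ρ (Iic 0) = 0 := by
    rw [hρ _ measurableSet_Iic]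
    refine measure_mono_null (show _ ⊆ ζ ⁻¹' Iic 0 from fun ω hω => hω.2) ?_
    rw [← Measure.map_apply hζ measurableSet_Iic, hlaw]
    exact withDensity_absolutelyContinuous _ _ (expν_Iic_zero hγ)
  have hIoi : ρ (Ioi 0) = 0 := measure_Ioi_eq_zero_of_le_mul_sub hγ.le hf fun s t hs hst =>
    (hρ _ measurableSet_Ioc).trans_le (h.measure_eq_and_mem_Ioc_le hγ hζ hζhat hf hlaw hs hst)
  refine nonpos_iff_eq_zero.1 ?_
  calc P {ω | ζhat ω = ζ ω} = ρ univ := by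
        rw [Measure.map_apply hζ MeasurableSet.univ, preimage_univ, Measure.restrict_apply_univ]
    _ ≤ ρ (Iic 0) + ρ (Ioi 0) := by rw [← Iic_union_Ioi]; exact measure_union_le _ _
    _ = 0 := by rw [hIic, hIoi, add_zero]

end JointCDFIdentity

theorem stmt_14_general {Ω : Type*} [MeasurableSpace Ω] (P : Measure Ω) [IsProbabilityMeasure P]
    (γ : ℝ) (hγ : 0 < γ)
    (ζ : Ω → ℝ) (hζm : Measurable ζ) (hζ0 : ∀ ω, 0 ≤ ζ ω)
    (f : ℝ → ℝ) (hf0 : ∀ x, 0 ≤ f x)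
    (hfmono : ∀ s t, 0 ≤ s → s ≤ t → f s ≤ f t)
    (hdens : Measure.map ζ P = (expν γ).withDensity (fun x => ENNReal.ofReal (f x))) :
    (∀ t, 0 ≤ t → f t * Real.exp (-γ * t) ∈ Set.Icc (0 : ℝ) 1) ∧
    (∀ ζhat : Ω → ℝ, Measurable ζhat → (∀ ω, 0 ≤ ζhat ω) →
      (∀ t u, 0 ≤ t → 0 ≤ u →
        P {ω | ζhat ω ≤ t ∧ ζ ω ≤ u} =
          P {ω | ζ ω ≤ min t u} +
            ENNReal.ofReal
              (f t * Real.exp (-γ * t) * (1 - Real.exp (-γ * max (u - t) 0)))) →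
      P {ω | ζhat ω < ζ ω} = 1 ∧
      (∀ t, 0 ≤ t →
        P {ω | ζhat ω ≤ t} =
          ENNReal.ofReal (f t * Real.exp (-γ * t)) + P {ω | ζ ω ≤ t})) := by
  have hf : MonotoneOn f (Ici 0) := fun s hs t _ hst => hfmono s t hs hst
  refine ⟨fun t ht => ⟨mul_nonneg (hf0 t) (exp_pos _).le, ?_⟩, fun ζhat hζhat _ hjoint => ?_⟩
  · refine ENNReal.ofReal_le_one.1 ((ofReal_mul_exp_le_withDensity_expν_Ioi hγ hf ht).trans ?_)
    rw [← hdens, Measure.map_apply hζm measurableSet_Ioi]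
    exact prob_le_one
  have h : JointCDFIdentity P γ f ζ ζhat := hjoint
  refine ⟨?_, fun t ht => h.measure_le hγ ht⟩
  have hle := h.ae_le hζm hζhat hζ0
  have hne : ∀ᵐ ω ∂P, ζhat ω ≠ ζ ω :=
    measure_eq_zero_iff_ae_notMem.1 (h.measure_eq_eq_zero hγ hζm hζhat hf hdens)
  rw [← measure_univ (μ := P), ← ae_iff_measure_eq (measurableSet_lt hζhat hζm).nullMeasurableSet]
  filter_upwards [hle, hne] with ω using lt_of_le_of_ne

/-- Remark 3.3(2): if the law of `ζ` has a nondecreasing, right-continuous density `f`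
with respect to `ν_γ`, then `σ(t) = f(t)e^{−γt}` takes values in `[0,1]` and any strong
memoryless time `ζ̂` built from this `σ` via identity (3.2) satisfies `ℙ(ζ̂ < ζ) = 1`
(i.e. `χ ≡ 1`) and `ℙ(ζ̂ ≤ t) = f(t)e^{−γt} + ℙ(ζ ≤ t)` for every `t ∈ ℝ₊`. -/
theorem stmt_14 {Ω : Type*} [MeasurableSpace Ω] (P : Measure Ω) [IsProbabilityMeasure P]
    (γ : ℝ) (hγ : 0 < γ)
    (ζ : Ω → ℝ) (hζm : Measurable ζ) (hζ0 : ∀ ω, 0 ≤ ζ ω)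
    (f : ℝ → ℝ) (hfm : Measurable f) (hf0 : ∀ x, 0 ≤ f x)
    (hfmono : ∀ s t, 0 ≤ s → s ≤ t → f s ≤ f t)
    (hfrc : ∀ t, 0 ≤ t → ContinuousWithinAt f (Set.Ici t) t)
    (hdens : Measure.map ζ P = (expν γ).withDensity (fun x => ENNReal.ofReal (f x))) :
    (∀ t, 0 ≤ t → f t * Real.exp (-γ * t) ∈ Set.Icc (0 : ℝ) 1) ∧
    (∀ ζhat : Ω → ℝ, Measurable ζhat → (∀ ω, 0 ≤ ζhat ω) →
      (∀ t u, 0 ≤ t → 0 ≤ u →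
        P {ω | ζhat ω ≤ t ∧ ζ ω ≤ u} =
          P {ω | ζ ω ≤ min t u} +
            ENNReal.ofReal
              (f t * Real.exp (-γ * t) * (1 - Real.exp (-γ * max (u - t) 0)))) →
      P {ω | ζhat ω < ζ ω} = 1 ∧
      (∀ t, 0 ≤ t →
        P {ω | ζhat ω ≤ t} =
          ENNReal.ofReal (f t * Real.exp (-γ * t)) + P {ω | ζ ω ≤ t})) :=
  stmt_14_general P γ hγ ζ hζm hζ0 f hf0 hfmono hdens
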